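/- Assume P ≥ 1 and assume there exists at least one y ∈ {0,1}^n with Σ_{i=1}^n w_i y_i = W. Then f has a unique maximizer over {0,1}^n if and only if there is exactly one x ∈ {0,1}^n with Σ_{i=1}^n w_i x_i = W attaining max{ Σ_{i=1}^n p_i y_i : y ∈ {0,1}^n, Σ_{i=1}^n w_i y_i = W }. -/

import Mathlib

/-!
On a weight-feasible 0-1 vector (`Σ w_i x_i = W`) the denominator of `f` is `1`, so `f` equals
`2 + Σ p_i x_i ≥ 2`. On any other 0-1 vector the denominator is an odd integer of absolute value
at least `2P - 1 ≥ 1`: if it is negative, `f < 0`; if it is positive, it is at least `1 + 2P`, and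
the numerator `2 + Σ p_i x_i ≤ 2 + P` is less than twice that. Hence every maximizer of `f` is
feasible, and among feasible vectors `f` is the profit shifted by `2`.
-/

/-- The hyperbolic objective
`f(x) = (2 + Σ p_i x_i) / (1 + 2P·(W − Σ w_i x_i))` with `P = Σ p_i`,
regarded as a rational number, on 0-1 vectors `x ∈ {0,1}^n`. -/
def hypObj (n : ℕ) (w p : Fin n → ℕ) (W : ℕ) (x : Fin n → ℤ) : ℚ :=
  ((2 + ∑ i : Fin n, (p i : ℤ) * x i : ℤ) : ℚ) /
    ((1 + 2 * (∑ i : Fin n, (p i : ℤ)) *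
        ((W : ℤ) - ∑ i : Fin n, (w i : ℤ) * x i) : ℤ) : ℚ)

open Finset

theorem and_forall_le_iff_of_forall_lt {α β : Type*} [Preorder β] {f : α → β} {D S : Set α}
    {x : α} (hSD : S ⊆ D) (hS : S.Nonempty) (hlt : ∀ a ∈ S, ∀ b ∈ D \ S, f b < f a) :
    (x ∈ D ∧ ∀ y ∈ D, f y ≤ f x) ↔ (x ∈ S ∧ ∀ y ∈ S, f y ≤ f x) := by
  constructor
  · rintro ⟨hxD, hmax⟩
    obtain ⟨s, hs⟩ := hS
    have hxS : x ∈ S := by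
      by_contra hxS
      exact (hlt s hs x ⟨hxD, hxS⟩).not_ge (hmax s (hSD hs))
    exact ⟨hxS, fun y hy => hmax y (hSD hy)⟩
  · rintro ⟨hxS, hmax⟩
    refine ⟨hSD hxS, fun y hyD => ?_⟩
    by_cases hyS : y ∈ S
    · exact hmax y hyS
    · exact (hlt x hxS y ⟨hyD, hyS⟩).le

section Binary

variable {ι : Type*} [Fintype ι] (p : ι → ℕ) {x : ι → ℤ}

theorem sum_mul_nonneg_of_binary (hx : ∀ i, x i = 0 ∨ x i = 1) :
    0 ≤ ∑ i, (p i : ℤ) * x i :=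
  sum_nonneg fun i _ => by rcases hx i with h | h <;> simp [h]

theorem sum_mul_le_sum_of_binary (hx : ∀ i, x i = 0 ∨ x i = 1) :
    ∑ i, (p i : ℤ) * x i ≤ ∑ i, (p i : ℤ) :=
  sum_le_sum fun i _ => by rcases hx i with h | h <;> simp [h]

end Binary

theorem two_add_div_one_add_mul_lt_two {P q d : ℤ} (hP : 1 ≤ P) (hq : 0 ≤ q) (hqP : q ≤ P)
    (hd : d ≠ 0) : ((2 + q : ℤ) : ℚ) / ((1 + 2 * P * d : ℤ) : ℚ) < 2 := by
  rcases hd.lt_or_gt with hneg | hpos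
  · have hden : 1 + 2 * P * d < 0 := by nlinarith
    have hnum : 0 < 2 + q := by omega
    exact (div_neg_of_pos_of_neg (by exact_mod_cast hnum) (by exact_mod_cast hden)).trans
      two_pos
  · have hden : 0 < 1 + 2 * P * d := by nlinarith
    rw [div_lt_iff₀ (by exact_mod_cast hden)]
    exact_mod_cast (by nlinarith : 2 + q < 2 * (1 + 2 * P * d))

section HypObj

variable {n : ℕ} {w p : Fin n → ℕ} {W : ℕ} {x y : Fin n → ℤ}

theorem hypObj_eq_of_sum_eq (hx : ∑ i, (w i : ℤ) * x i = W) :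
    hypObj n w p W x = ((2 + ∑ i, (p i : ℤ) * x i : ℤ) : ℚ) := by
  simp [hypObj, hx]

theorem two_le_hypObj (hx : ∀ i, x i = 0 ∨ x i = 1) (hxW : ∑ i, (w i : ℤ) * x i = W) :
    2 ≤ hypObj n w p W x := by
  rw [hypObj_eq_of_sum_eq hxW]
  exact_mod_cast le_add_of_nonneg_right (sum_mul_nonneg_of_binary p hx)

theorem hypObj_lt_two (hP : 1 ≤ ∑ i, (p i : ℤ)) (hx : ∀ i, x i = 0 ∨ x i = 1)
    (hxW : ∑ i, (w i : ℤ) * x i ≠ W) : hypObj n w p W x < 2 :=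
  two_add_div_one_add_mul_lt_two hP (sum_mul_nonneg_of_binary p hx)
    (sum_mul_le_sum_of_binary p hx) (sub_ne_zero.mpr hxW.symm)

theorem hypObj_le_hypObj_iff_of_sum_eq (hxW : ∑ i, (w i : ℤ) * x i = W)
    (hyW : ∑ i, (w i : ℤ) * y i = W) :
    hypObj n w p W y ≤ hypObj n w p W x ↔ ∑ i, (p i : ℤ) * y i ≤ ∑ i, (p i : ℤ) * x i := by
  rw [hypObj_eq_of_sum_eq hxW, hypObj_eq_of_sum_eq hyW, Int.cast_le, add_le_add_iff_left]

end HypObj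

/-- If `P ≥ 1` and some 0-1 vector `y` satisfies `Σ w_i y_i = W`, then `f` has a
unique maximizer over `{0,1}^n` iff exactly one feasible 0-1 vector attains the
maximum profit `max{Σ p_i y_i : Σ w_i y_i = W}`. -/
theorem hypObj_unique_maximizer_iff (n : ℕ) (w p : Fin n → ℕ) (W : ℕ)
    (hP : 1 ≤ ∑ i : Fin n, (p i : ℤ))
    (hfeas : ∃ y : Fin n → ℤ, (∀ i, y i = 0 ∨ y i = 1) ∧
      (∑ i : Fin n, (w i : ℤ) * y i) = (W : ℤ)) :
    (∃! x : Fin n → ℤ, (∀ i, x i = 0 ∨ x i = 1) ∧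
        ∀ y : Fin n → ℤ, (∀ i, y i = 0 ∨ y i = 1) →
          hypObj n w p W y ≤ hypObj n w p W x) ↔
      (∃! x : Fin n → ℤ, (∀ i, x i = 0 ∨ x i = 1) ∧
        (∑ i : Fin n, (w i : ℤ) * x i) = (W : ℤ) ∧
        ∀ y : Fin n → ℤ, (∀ i, y i = 0 ∨ y i = 1) →
          (∑ i : Fin n, (w i : ℤ) * y i) = (W : ℤ) →
            (∑ i : Fin n, (p i : ℤ) * y i) ≤ ∑ i : Fin n, (p i : ℤ) * x i) := by
  let B : Set (Fin n → ℤ) := {x | ∀ i, x i = 0 ∨ x i = 1}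
  let F : Set (Fin n → ℤ) := {x | x ∈ B ∧ ∑ i, (w i : ℤ) * x i = W}
  have hsep : ∀ a ∈ F, ∀ b ∈ B \ F, hypObj n w p W b < hypObj n w p W a :=
    fun a ⟨ha, haW⟩ b ⟨hb, hbF⟩ =>
      (hypObj_lt_two hP hb fun hbW => hbF ⟨hb, hbW⟩).trans_le (two_le_hypObj ha haW)
  refine existsUnique_congr fun x => ?_
  refine (and_forall_le_iff_of_forall_lt (fun _ h => h.1) hfeas hsep).trans ?_
  constructor
  · rintro ⟨⟨hx, hxW⟩, hmax⟩
    exact ⟨hx, hxW, fun y hy hyW =>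
      (hypObj_le_hypObj_iff_of_sum_eq hxW hyW).mp (hmax y ⟨hy, hyW⟩)⟩
  · rintro ⟨hx, hxW, hmax⟩
    exact ⟨⟨hx, hxW⟩, fun y ⟨hy, hyW⟩ =>
      (hypObj_le_hypObj_iff_of_sum_eq hxW hyW).mpr (hmax y hy hyW)⟩
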